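/- The class β(X ⟲ C_3) of the diagonal C_3-action on P^2 by (x:y:z) ↦ (x : ζ_3 y : ζ_3^2 z) equals 3·[1,2] = 0 in B_2(C_3); whereas the class of the C_3-action on the cubic surface w^3 = f_3(x,y,z) by (w:x:y:z) ↦ (ζ_3 w : x : y : z) equals [2,0] ≠ 0 in B_2(C_3). Hence these two actions are not equivariantly birational. -/

import Mathlib

open FreeAbelianGroup

/-- A multiset of characters generates the character group. -/
def Adm {A : Type} [AddCommGroup A] (s : Multiset A) : Prop :=
  AddSubgroup.closure {x | x ∈ s} = ⊤

/-- Admissible symbols: multisets of `n` characters generating `A`. -/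
def Symb (A : Type) [AddCommGroup A] (n : ℕ) : Type :=
  {s : Multiset A // Multiset.card s = n ∧ Adm s}

/-- The blow-up relations (B₂). -/
def blowupRels (A : Type) [AddCommGroup A] (n : ℕ) :
    Set (FreeAbelianGroup (Symb A n)) :=
  {x | ∃ (a b : A) (t : Multiset A)
      (h : Multiset.card (a ::ₘ b ::ₘ t) = n ∧ Adm (a ::ₘ b ::ₘ t))
      (h1 : Multiset.card (a ::ₘ (b - a) ::ₘ t) = n ∧ Adm (a ::ₘ (b - a) ::ₘ t))
      (h2 : Multiset.card ((a - b) ::ₘ b ::ₘ t) = n ∧ Adm ((a - b) ::ₘ b ::ₘ t)),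
      a ≠ b ∧
      x = of (⟨a ::ₘ b ::ₘ t, h⟩ : Symb A n) - of ⟨a ::ₘ (b - a) ::ₘ t, h1⟩
            - of ⟨(a - b) ::ₘ b ::ₘ t, h2⟩} ∪
  {x | ∃ (a : A) (t : Multiset A)
      (h : Multiset.card (a ::ₘ a ::ₘ t) = n ∧ Adm (a ::ₘ a ::ₘ t))
      (h0 : Multiset.card ((0 : A) ::ₘ a ::ₘ t) = n ∧ Adm ((0 : A) ::ₘ a ::ₘ t)),
      x = of (⟨a ::ₘ a ::ₘ t, h⟩ : Symb A n) - of ⟨(0 : A) ::ₘ a ::ₘ t, h0⟩}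

/-- The group of equivariant birational types `𝓑ₙ(G)`, for `A = G^∨`. -/
def B (A : Type) [AddCommGroup A] (n : ℕ) : Type :=
  FreeAbelianGroup (Symb A n) ⧸ AddSubgroup.closure (blowupRels A n)

instance (A : Type) [AddCommGroup A] (n : ℕ) : AddCommGroup (B A n) := by
  unfold B; infer_instance

/-- The class of a symbol in `𝓑ₙ(G)`. -/
def symb {A : Type} [AddCommGroup A] {n : ℕ} (s : Multiset A)
    (h : Multiset.card s = n ∧ Adm s) : B A n :=
  QuotientAddGroup.mk (of (⟨s, h⟩ : Symb A n))

lemma adm_of_unit {N : ℕ} [NeZero N] {s : Multiset (ZMod N)} {u : ZMod N}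
    (hu : u ∈ s) (h : IsUnit u) : Adm s := by
  rw [Adm, AddSubgroup.eq_top_iff']
  intro x
  have hu' : u ∈ AddSubgroup.closure {y | y ∈ s} := AddSubgroup.subset_closure hu
  obtain ⟨v, hv⟩ := h.exists_left_inv
  have hx : x = (x * v).val • u := by
    rw [nsmul_eq_mul, ZMod.natCast_val, ZMod.cast_id, mul_assoc, hv, mul_one]
  rw [hx]
  exact AddSubgroup.nsmul_mem _ hu' _

lemma admU {N : ℕ} [NeZero N] {s : Multiset (ZMod N)} {u v : ZMod N}
    (hu : u ∈ s) (huv : u * v = 1) : Adm s :=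
  adm_of_unit hu (isUnit_iff_exists_inv.mpr ⟨v, huv⟩)

/-- The symbol `[1,2]` in `B₂(C₃)` — the tangent weights at each of the three
fixed points of the diagonal action of `C₃` on `ℙ²`. -/
def c3_12 : B (ZMod 3) 2 :=
  symb {1, 2} ⟨by decide, admU (u := 1) (v := 1) (by decide) (by decide)⟩

/-- The symbol `[2,0]` in `B₂(C₃)` — the class of the fixed cubic curve
`{w = 0}` of the `C₃`-action on the cubic surface `w³ = f₃(x,y,z)`. -/
def c3_20 : B (ZMod 3) 2 :=
  symb {2, 0} ⟨by decide, admU (u := 2) (v := 2) (by decide) (by decide)⟩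

/-!
The relation `[a, b] = [a, b - a] + [a - b, b]` with `b = 0` reads `[a, 0] = [a, -a] + [a, 0]`,
so `[1, 2] = [1, -1] = 0`. To see `[2, 0] ≠ 0`, map `𝓑₂(C₃)` to `ℤ` by
`[0, 1], [1, 1] ↦ 1`, `[0, 2], [2, 2] ↦ -1`, `[1, 2] ↦ 0`; this respects both families of
relations.
-/

section

variable {A : Type} [AddCommGroup A] {n : ℕ}

lemma symb_congr {s s' : Multiset A} (hs : s = s') (h : Multiset.card s = n ∧ Adm s)
    (h' : Multiset.card s' = n ∧ Adm s') : symb s h = symb s' h' := by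
  subst hs
  rfl

lemma symb_blowup {a b : A} {t : Multiset A} (hab : a ≠ b)
    (h : Multiset.card (a ::ₘ b ::ₘ t) = n ∧ Adm (a ::ₘ b ::ₘ t))
    (h1 : Multiset.card (a ::ₘ (b - a) ::ₘ t) = n ∧ Adm (a ::ₘ (b - a) ::ₘ t))
    (h2 : Multiset.card ((a - b) ::ₘ b ::ₘ t) = n ∧ Adm ((a - b) ::ₘ b ::ₘ t)) :
    symb (a ::ₘ b ::ₘ t) h =
      symb (a ::ₘ (b - a) ::ₘ t) h1 + symb ((a - b) ::ₘ b ::ₘ t) h2 := by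
  rw [← sub_eq_zero, ← sub_sub]
  exact (QuotientAddGroup.eq_zero_iff _).2
    (AddSubgroup.subset_closure (Or.inl ⟨a, b, t, h, h1, h2, hab, rfl⟩))

lemma adm_cons_zero_of_adm_cons_neg {a : A} {t : Multiset A} (h : Adm (a ::ₘ -a ::ₘ t)) :
    Adm (a ::ₘ 0 ::ₘ t) := by
  rw [Adm, eq_top_iff, ← h, AddSubgroup.closure_le]
  have ha : a ∈ AddSubgroup.closure {x | x ∈ a ::ₘ 0 ::ₘ t} :=
    AddSubgroup.subset_closure (Multiset.mem_cons_self _ _)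
  intro x hx
  rcases Multiset.mem_cons.1 hx with rfl | hx
  · exact ha
  rcases Multiset.mem_cons.1 hx with rfl | hx
  · exact neg_mem ha
  · exact AddSubgroup.subset_closure (by simp [hx])

lemma symb_cons_neg_eq_zero {a : A} {t : Multiset A} (ha : a ≠ 0)
    (h : Multiset.card (a ::ₘ -a ::ₘ t) = n ∧ Adm (a ::ₘ -a ::ₘ t)) :
    symb (a ::ₘ -a ::ₘ t) h = 0 := by
  have h0 : Multiset.card (a ::ₘ 0 ::ₘ t) = n ∧ Adm (a ::ₘ 0 ::ₘ t) :=
    ⟨by simpa using h.1, adm_cons_zero_of_adm_cons_neg h.2⟩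
  have key := symb_blowup ha h0 (by simpa using h) (by simpa using h0)
  rw [symb_congr (s := a ::ₘ (0 - a) ::ₘ t) (by rw [zero_sub]) _ h,
    symb_congr (s := (a - 0) ::ₘ 0 ::ₘ t) (by rw [sub_zero]) _ h0] at key
  exact right_eq_add.mp key

variable {M : Type*} [AddCommGroup M]

def RespectsBlowup (n : ℕ) (f : Multiset A → M) : Prop :=
  (∀ (a b : A) (t : Multiset A), a ≠ b → Multiset.card (a ::ₘ b ::ₘ t) = n →
      f (a ::ₘ b ::ₘ t) = f (a ::ₘ (b - a) ::ₘ t) + f ((a - b) ::ₘ b ::ₘ t)) ∧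
    ∀ (a : A) (t : Multiset A), Multiset.card (a ::ₘ a ::ₘ t) = n →
      f (a ::ₘ a ::ₘ t) = f (0 ::ₘ a ::ₘ t)

variable (f : Multiset A → M)

def symbLift : FreeAbelianGroup (Symb A n) →+ M :=
  FreeAbelianGroup.lift fun s => f s.1

lemma symbLift_of (s : Multiset A) (h : Multiset.card s = n ∧ Adm s) :
    symbLift f (of ⟨s, h⟩) = f s :=
  FreeAbelianGroup.lift_apply_of _ _

lemma symbLift_eq_zero_of_mem_blowupRels (hf : RespectsBlowup n f) :
    ∀ x ∈ blowupRels A n, symbLift f x = 0 := by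
  -- `erw`: `blowupRels` is elaborated in the free group on the subtype underlying `Symb A n`.
  rintro x (⟨a, b, t, h, h1, h2, hab, rfl⟩ | ⟨a, t, h, h0, rfl⟩)
  · erw [map_sub, map_sub, symbLift_of, symbLift_of, symbLift_of, hf.1 a b t hab h.1]
    abel
  · erw [map_sub, symbLift_of, symbLift_of, hf.2 a t h.1, sub_self]

def B.lift (hf : RespectsBlowup n f) : B A n →+ M :=
  QuotientAddGroup.lift _ (symbLift f)
    ((AddSubgroup.closure_le _).2 (symbLift_eq_zero_of_mem_blowupRels f hf))

lemma B.lift_symb (hf : RespectsBlowup n f) (s : Multiset A)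
    (h : Multiset.card s = n ∧ Adm s) : B.lift f hf (symb s h) = f s :=
  symbLift_of f s h

end

lemma Multiset.eq_zero_of_card_cons_cons_eq_two {α : Type*} {a b : α} {t : Multiset α}
    (h : Multiset.card (a ::ₘ b ::ₘ t) = 2) : t = 0 := by
  simpa using h

def c3Weight (s : Multiset (ZMod 3)) : ℤ :=
  if s = {0, 1} ∨ s = {1, 1} then 1
  else if s = {0, 2} ∨ s = {2, 2} then -1 else 0

lemma respectsBlowup_c3Weight : RespectsBlowup 2 c3Weight := by
  constructor
  · intro a b t _ ht
    obtain rfl := Multiset.eq_zero_of_card_cons_cons_eq_two ht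
    revert a b
    decide
  · intro a t ht
    obtain rfl := Multiset.eq_zero_of_card_cons_cons_eq_two ht
    revert a
    decide

def c3Degree : B (ZMod 3) 2 →+ ℤ :=
  B.lift c3Weight respectsBlowup_c3Weight

lemma c3_12_eq_zero : c3_12 = 0 := by
  have h : Multiset.card (1 ::ₘ -1 ::ₘ 0 : Multiset (ZMod 3)) = 2 ∧
      Adm (1 ::ₘ -1 ::ₘ 0 : Multiset (ZMod 3)) :=
    ⟨rfl, adm_of_unit (Multiset.mem_cons_self _ _) isUnit_one⟩
  exact (symb_congr (by decide) _ h).trans (symb_cons_neg_eq_zero one_ne_zero h)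

lemma c3Degree_c3_20 : c3Degree c3_20 = -1 := by
  rw [c3_20, c3Degree, B.lift_symb]
  decide

/-- `β(ℙ² ⟲ C₃) = 3·[1,2] = 0` while `β(cubic ⟲ C₃) = [2,0] ≠ 0`
in `𝓑₂(C₃)`; in particular the two invariants differ, so the two actions are
not equivariantly birational. -/
theorem P2_vs_cubic_surface_C3 :
    3 • c3_12 = 0 ∧ c3_20 ≠ 0 ∧ 3 • c3_12 ≠ c3_20 := by
  have h20 : c3_20 ≠ 0 := fun h => by simpa [h] using c3Degree_c3_20
  rw [c3_12_eq_zero, smul_zero]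
  exact ⟨rfl, h20, h20.symm⟩
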